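/- If O is a valuation ring of a field K that is relatively separably algebraically closed in a field extension L, and O' is a henselian valuation ring of L with O' ∩ K = O, then O is henselian. -/

import Mathlib

/-!
Henselianity of `O` is tested on simple roots: for a monic `f` over `O` and a simple root `a₀` of
`f` modulo the maximal ideal, Hensel's lemma in `O'` lifts `a₀` to a root `b ∈ O'` at which `f'` is
still a unit. Being a simple root of a polynomial over `K`, `b` is separable algebraic over `K`, so
`b ∈ K ∩ O' = O`. Since `O → O'` is an injective local homomorphism, `b` is the required lift in `O`.
-/

open Polynomial IsLocalRing

theorem IsLocalRing.isUnit_eval_of_sub_mem_maximalIdeal {R : Type*} [CommRing R] [IsLocalRing R]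
    {p : R[X]} {a b : R} (ha : IsUnit (p.eval a)) (hab : b - a ∈ maximalIdeal R) :
    IsUnit (p.eval b) := by
  have hres : residue R b = residue R a := Ideal.Quotient.eq.mpr hab
  rw [← residue_ne_zero_iff_isUnit] at ha ⊢
  rwa [← eval₂_at_apply, hres, eval₂_at_apply]

theorem HenselianLocalRing.of_injective_of_simple_roots_mem_range {A B : Type*} [CommRing A]
    [CommRing B] [HenselianLocalRing B] (φ : A →+* B) [IsLocalHom φ] (hφ : Function.Injective φ)
    (hroots : ∀ f : A[X], f.Monic → ∀ b : B, (f.map φ).IsRoot b →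
      IsUnit ((f.map φ).derivative.eval b) → b ∈ φ.range) :
    HenselianLocalRing A := by
  have := φ.domain_isLocalRing
  refine { is_henselian := fun f hf a₀ h₁ h₂ => ?_ }
  have h₂' : IsUnit ((f.map φ).derivative.eval (φ a₀)) := by
    rw [derivative_map, eval_map_apply]
    exact h₂.map φ
  obtain ⟨b, hb, hba⟩ := HenselianLocalRing.is_henselian (f.map φ) (hf.map φ) (φ a₀)
    (by rw [eval_map_apply]; exact map_nonunit φ _ h₁) h₂'
  obtain ⟨a, rfl⟩ := hroots f hf b hb (isUnit_eval_of_sub_mem_maximalIdeal h₂' hba)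
  refine ⟨a, hφ ?_, ?_⟩
  · rw [IsRoot, eval_map_apply] at hb
    rw [hb, map_zero]
  · rwa [← map_sub, ← Ideal.mem_comap, maximalIdeal_comap] at hba

theorem isSeparable_of_aeval_derivative_ne_zero {K L : Type*} [Field K] [CommRing L]
    [IsDomain L] [Algebra K L] {p : K[X]} {x : L} (hp : aeval x p = 0)
    (hp' : aeval x (derivative p) ≠ 0) : IsSeparable K x := by
  have hp0 : p ≠ 0 := by rintro rfl; simp at hp'
  have hx : IsIntegral K x := IsAlgebraic.isIntegral ⟨p, hp0, hp⟩
  obtain ⟨q, rfl⟩ := minpoly.dvd K x hp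
  refine (separable_iff_derivative_ne_zero (minpoly.irreducible hx)).mpr fun h => hp' ?_
  simp [derivative_mul, h]

theorem ValuationSubring.isLocalHom_restrict_comap {K L : Type*} [Field K] [Field L]
    (A : ValuationSubring L) (f : K →+* L) :
    IsLocalHom (f.restrict (A.comap f) A fun _ => id) where
  map_nonunit x := by
    rintro ⟨u, hu⟩
    have hx : (x : K) ≠ 0 := by
      intro h
      obtain rfl : x = 0 := Subtype.ext h
      exact u.ne_zero (hu.trans (map_zero _))
    have hinv : (x : K)⁻¹ ∈ A.comap f := by
      rw [mem_comap, map_inv₀, ← RingHom.coe_restrict_apply f _ A (fun _ => id), ← hu]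
      exact (map_units_inv A.subtype u) ▸ (u⁻¹ : Aˣ).val.2
    exact .of_mul_eq_one ⟨_, hinv⟩ (Subtype.ext (mul_inv_cancel₀ hx))

/-- If `K` is relatively separably algebraically closed in a field extension `L`
(every element of `L` separable algebraic over `K` lies in `K`), `O'` is a henselian
valuation ring of `L`, and `O = O' ∩ K` is the induced valuation ring of `K`, then
`O` is henselian. -/
theorem restriction_henselian_of_sep_alg_closed
    {K L : Type*} [Field K] [Field L] [Algebra K L]
    (hsac : ∀ x : L, IsIntegral K x → (minpoly K x).Separable →
      x ∈ (algebraMap K L).range)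
    (O' : ValuationSubring L) (hhens : HenselianLocalRing O') :
    HenselianLocalRing (O'.comap (algebraMap K L)) := by
  set O := O'.comap (algebraMap K L)
  let φ := (algebraMap K L).restrict O O' fun _ => id
  have := O'.isLocalHom_restrict_comap (algebraMap K L)
  have hφ : Function.Injective φ := fun x y h =>
    Subtype.ext ((algebraMap K L).injective (congrArg Subtype.val h))
  refine .of_injective_of_simple_roots_mem_range φ hφ fun f _ b hb hb' => ?_
  have haeval (p : O[X]) : aeval (b : L) (p.map O.subtype) = (((p.map φ).eval b : O') : L) := by
    rw [aeval_def, eval₂_map, eval_map, ← O'.subtype_apply, ← O'.subtype_apply, hom_eval₂]; rfl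
  have hsep : IsSeparable K (b : L) := isSeparable_of_aeval_derivative_ne_zero
    (p := f.map O.subtype) (by rw [haeval, hb.eq_zero, ZeroMemClass.coe_zero])
    (by rw [derivative_map, haeval, ← derivative_map]; exact_mod_cast hb'.ne_zero)
  obtain ⟨a, ha⟩ := hsac b hsep.isIntegral hsep
  exact ⟨⟨a, by rw [ValuationSubring.mem_comap, ha]; exact b.2⟩, Subtype.ext ha⟩
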